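/- arXiv:0906.1317 — 10 statements merged into one kernel-verified Lean document; each statement's English description precedes it below -/
import Mathlib

section
/- For every positive integer n, the sum over k from 0 to n-1 of binomial(n, k+1) * (2k-1)!! * (2n-2k-3)!! equals (2n-1)!!, where (-1)!! = 1 and (-3)!! = -1. -/
/-!
Put `a j = (2j-3)‼` and `b j = (2j-1)‼`, so that `a (j+1) = (2j-1) a j` and `b (j+1) = (2j+1) b j`.
By Pascal's rule (a discrete Leibniz rule) the binomial convolution `F n = ∑ C(n,i) a i b (n-i)`
then satisfies `F (n+1) = 2n F n`, whence `F n = 0` for `n ≥ 1`, since the factor at `n = 0`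
vanishes. Separating the term `i = 0`, which is `-(2n-1)‼`, gives the identity. (In terms of
exponential generating functions: `-√(1-2x) · (1-2x)^(-1/2) = -1`.)
-/

open Nat Finset

section BinomialConvolution

variable {R : Type*} [CommSemiring R]

def binomialConvolution (a b : ℕ → R) (n : ℕ) : R :=
  ∑ ij ∈ antidiagonal n, (n.choose ij.1 : R) * (a ij.1 * b ij.2)

variable {a b : ℕ → R} {s c d : R}

theorem binomialConvolution_succ (ha : ∀ j, a (j + 1) = (s * j + c) * a j)
    (hb : ∀ j, b (j + 1) = (s * j + d) * b j) (n : ℕ) :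
    binomialConvolution a b (n + 1) = (s * n + c + d) * binomialConvolution a b n := by
  rw [binomialConvolution, sum_antidiagonal_choose_succ_mul (fun i j => a i * b j),
    ← sum_add_distrib, binomialConvolution, mul_sum]
  refine sum_congr rfl fun ij hij => ?_
  have hn : ij.1 + ij.2 = n := mem_antidiagonal.1 hij
  rw [choose_symm_of_eq_add hn.symm, ha, hb, ← hn]
  push_cast
  ring

theorem binomialConvolution_eq_prod (ha : ∀ j, a (j + 1) = (s * j + c) * a j)
    (hb : ∀ j, b (j + 1) = (s * j + d) * b j) (n : ℕ) :
    binomialConvolution a b n = (∏ i ∈ range n, (s * i + c + d)) * (a 0 * b 0) := by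
  induction n with
  | zero => simp [binomialConvolution]
  | succ n ih => rw [binomialConvolution_succ ha hb, ih, prod_range_succ]; ring

end BinomialConvolution

def oddDoubleFactorial (j : ℕ) : ℤ := ((2 * j - 1)‼ : ℕ)

theorem oddDoubleFactorial_succ (j : ℕ) :
    oddDoubleFactorial (j + 1) = (2 * j + 1) * oddDoubleFactorial j := by
  rw [oddDoubleFactorial, oddDoubleFactorial, show 2 * (j + 1) - 1 = 2 * j + 1 by omega,
    doubleFactorial_add_one]
  push_cast
  rfl

/-- `(2j - 3)‼`, with the convention `(-3)‼ = -1`. -/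
def oddDoubleFactorialPred : ℕ → ℤ
  | 0 => -1
  | j + 1 => oddDoubleFactorial j

theorem oddDoubleFactorialPred_succ (j : ℕ) :
    oddDoubleFactorialPred (j + 1) = (2 * j - 1) * oddDoubleFactorialPred j := by
  cases j with
  | zero => simp [oddDoubleFactorialPred, oddDoubleFactorial]
  | succ j => simp only [oddDoubleFactorialPred, oddDoubleFactorial_succ]; push_cast; ring

theorem binomialConvolution_oddDoubleFactorialPred_eq_zero {n : ℕ} (hn : 0 < n) :
    binomialConvolution oddDoubleFactorialPred oddDoubleFactorial n = 0 := by
  rw [binomialConvolution_eq_prod (s := 2) (c := -1) (d := 1) oddDoubleFactorialPred_succ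
    oddDoubleFactorial_succ]
  exact mul_eq_zero_of_left (prod_eq_zero (mem_range.2 hn) (by simp)) _

theorem stmt0 (n : ℕ) (hn : 0 < n) :
    ∑ k ∈ Finset.range n, n.choose (k+1) * (2*k-1)‼ * (2*n-2*k-3)‼ = (2*n-1)‼ := by
  have h := binomialConvolution_oddDoubleFactorialPred_eq_zero hn
  obtain ⟨m, rfl⟩ : ∃ m, n = m + 1 := ⟨n - 1, by omega⟩
  rw [binomialConvolution, Nat.sum_antidiagonal_succ,
    Nat.sum_antidiagonal_eq_sum_range_succ_mk] at h
  simp only [oddDoubleFactorialPred, oddDoubleFactorial, choose_zero_right, Nat.cast_one,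
    succ_eq_add_one] at h
  have hexp : ∀ k ∈ range (m + 1), 2 * (m + 1) - 2 * k - 3 = 2 * (m - k) - 1 := fun k hk => by
    have := mem_range.1 hk
    omega
  zify
  rw [sum_congr rfl fun k hk => by rw [hexp k hk, mul_assoc]]
  linarith
end

section
/- For every positive integer n, the sum over k from 1 to n of ((n-1)!/(k-1)!) * k * (2k-3)!! equals (2n-1)!!, where (-1)!! = 1. -/
open Nat Finset

/-! Writing `S m` for the sum with upper limit `m + 1`, the top term is `(m + 2) (2m + 1)‼` and the
others pick up a factor `m + 1`, so `S (m + 1) = (m + 1) S m + (m + 2) (2m + 1)‼`; since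
`(m + 1) + (m + 2) = 2m + 3`, this is the recursion of `(2m + 3)‼`. -/

theorem factorial_succ_div_factorial {m j : ℕ} (h : j ≤ m) :
    (m + 1)! / j ! = (m + 1) * (m ! / j !) := by
  rw [factorial_succ, Nat.mul_div_assoc _ (factorial_dvd_factorial h)]

theorem sum_Icc_factorial_div_mul_doubleFactorial (m : ℕ) :
    ∑ k ∈ Icc 1 (m + 1), m ! / (k - 1)! * k * (2 * k - 3)‼ = (2 * m + 1)‼ := by
  induction m with
  | zero => decide
  | succ m ih =>
    have hfactor : ∑ k ∈ Icc 1 (m + 1), (m + 1)! / (k - 1)! * k * (2 * k - 3)‼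
        = (m + 1) * ∑ k ∈ Icc 1 (m + 1), m ! / (k - 1)! * k * (2 * k - 3)‼ := by
      rw [mul_sum]
      refine sum_congr rfl fun k hk => ?_
      rw [factorial_succ_div_factorial (by grind)]
      ring
    rw [sum_Icc_succ_top (by omega), hfactor, ih, show m + 1 + 1 - 1 = m + 1 by rfl,
      Nat.div_self (factorial_pos _), show 2 * (m + 1 + 1) - 3 = 2 * m + 1 by omega,
      show 2 * (m + 1) + 1 = 2 * m + 1 + 2 by ring, doubleFactorial_add_two]
    ring

theorem stmt1 (n : ℕ) (hn : 0 < n) :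
    ∑ k ∈ Finset.Icc 1 n, (n-1)! / (k-1)! * k * (2*k-3)‼ = (2*n-1)‼ := by
  obtain ⟨m, rfl⟩ := exists_add_one_eq.mpr hn
  simpa [show 2 * (m + 1) - 1 = 2 * m + 1 by omega] using
    sum_Icc_factorial_div_mul_doubleFactorial m
end

section
/- For every nonnegative integer n, the sum over k from 0 to floor(n/2) of binomial(n, 2k) * binomial(2k, k) * n! / 2^(2k) equals (2n-1)!!. -/
/-!
Multiplied by `2 ^ n`, the identity reads
`∑ₖ C(n, 2k) C(2k, k) 2 ^ (n - 2k) · n! = C(2n, n) · n! = 2 ^ n (2n - 1)‼`.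
The sum is the coefficient of `X ^ n` in `((1 + X²) + 2X) ^ n = (1 + X) ^ (2n)`, and each division
by `4 ^ k` is exact because `C(2k, k) (2k)! = 4 ^ k ((2k - 1)‼)²`.
-/

open Nat Finset Polynomial

theorem Nat.factorial_two_mul_eq_mul_doubleFactorial (k : ℕ) :
    (2 * k)! = 2 ^ k * k ! * (2 * k - 1)‼ := by
  rcases k with _ | k
  · rfl
  · rw [show 2 * (k + 1) = 2 * k + 1 + 1 by ring, factorial_eq_mul_doubleFactorial,
      show 2 * k + 1 + 1 = 2 * (k + 1) by ring, doubleFactorial_two_mul]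
    rfl

theorem Nat.choose_two_mul_self_mul_factorial (k : ℕ) :
    (2 * k).choose k * k ! = 2 ^ k * (2 * k - 1)‼ := by
  apply Nat.eq_of_mul_eq_mul_right k.factorial_pos
  calc (2 * k).choose k * k ! * k ! = (2 * k)! := by
        simpa [two_mul] using choose_mul_factorial_mul_factorial (le_add_right k k)
    _ = 2 ^ k * (2 * k - 1)‼ * k ! := by rw [factorial_two_mul_eq_mul_doubleFactorial]; ring

theorem Nat.four_pow_dvd_choose_mul_choose_mul_factorial {n k : ℕ} (h : 2 * k ≤ n) :
    2 ^ (2 * k) ∣ n.choose (2 * k) * (2 * k).choose k * n ! := by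
  have hcentral : (2 * k).choose k * (2 * k)! = 2 ^ (2 * k) * ((2 * k - 1)‼) ^ 2 :=
    calc (2 * k).choose k * (2 * k)! = 2 ^ k * (2 * k - 1)‼ * ((2 * k).choose k * k !) := by
          rw [factorial_two_mul_eq_mul_doubleFactorial]; ring
      _ = 2 ^ (2 * k) * ((2 * k - 1)‼) ^ 2 := by rw [choose_two_mul_self_mul_factorial]; ring
  rw [mul_assoc]
  exact dvd_mul_of_dvd_right ((Dvd.intro _ hcentral.symm).trans
    (mul_dvd_mul_left _ (factorial_dvd_factorial h))) _

theorem Finset.sum_range_succ_ite_two_dvd {M : Type*} [AddCommMonoid M] (f : ℕ → M) (n : ℕ) :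
    ∑ m ∈ range (n + 1), (if 2 ∣ m then f m else 0) = ∑ k ∈ range (n / 2 + 1), f (2 * k) := by
  have hevens : (range (n + 1)).filter (2 ∣ ·) = (range (n / 2 + 1)).image (2 * ·) := by
    ext m
    simp only [mem_filter, mem_range, mem_image]
    constructor
    · rintro ⟨hm, k, rfl⟩
      exact ⟨k, by omega, rfl⟩
    · rintro ⟨k, hk, rfl⟩
      exact ⟨by omega, dvd_mul_right 2 k⟩
  rw [← sum_filter, hevens, sum_image fun a _ b _ => by simp]

theorem Polynomial.coeff_one_add_X_sq_pow (R : Type*) [CommSemiring R] (m j : ℕ) :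
    ((1 + X ^ 2 : R[X]) ^ m).coeff j = if 2 ∣ j then (m.choose (j / 2) : R) else 0 := by
  have hexpand : (1 + X ^ 2 : R[X]) ^ m = expand R 2 ((1 + X) ^ m) := by
    rw [map_pow, map_add, map_one, expand_X]
  rw [hexpand, coeff_expand two_pos, coeff_one_add_X_pow]

theorem Nat.sum_choose_mul_choose_mul_two_pow (n : ℕ) :
    ∑ k ∈ range (n / 2 + 1), n.choose (2 * k) * (2 * k).choose k * 2 ^ (n - 2 * k)
      = (2 * n).choose n := by
  have hsq : (1 + X : ℕ[X]) ^ (2 * n) = ((1 + X ^ 2) + 2 * X) ^ n := by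
    rw [pow_mul]; ring
  have hcoeff := coeff_one_add_X_pow ℕ (2 * n) n
  rw [hsq, add_pow, finsetSum_coeff, Nat.cast_id] at hcoeff
  calc ∑ k ∈ range (n / 2 + 1), n.choose (2 * k) * (2 * k).choose k * 2 ^ (n - 2 * k)
      = ∑ m ∈ range (n + 1),
          if 2 ∣ m then n.choose m * m.choose (m / 2) * 2 ^ (n - m) else 0 := by
        rw [sum_range_succ_ite_two_dvd]
        exact sum_congr rfl fun k _ => by rw [Nat.mul_div_cancel_left k two_pos]
    _ = (2 * n).choose n := hcoeff ▸ sum_congr rfl fun m hm => ?_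
  have hmn : m ≤ n := Nat.lt_succ_iff.mp (mem_range.mp hm)
  have hterm : (1 + X ^ 2 : ℕ[X]) ^ m * (2 * X) ^ (n - m) * (n.choose m : ℕ[X])
      = ((n.choose m * 2 ^ (n - m) : ℕ) : ℕ[X]) * (X ^ (n - m) * (1 + X ^ 2) ^ m) := by
    push_cast
    ring
  rw [hterm, coeff_natCast_mul, coeff_X_pow_mul', if_pos (Nat.sub_le n m), Nat.sub_sub_self hmn,
    coeff_one_add_X_sq_pow, mul_ite, mul_zero, mul_right_comm]
  rfl

theorem stmt2 (n : ℕ) :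
    ∑ k ∈ Finset.range (n/2 + 1), n.choose (2*k) * (2*k).choose k * n ! / 2^(2*k)
      = (2*n-1)‼ := by
  have hcancel : ∀ k ∈ range (n / 2 + 1),
      2 ^ n * (n.choose (2 * k) * (2 * k).choose k * n ! / 2 ^ (2 * k))
        = n.choose (2 * k) * (2 * k).choose k * 2 ^ (n - 2 * k) * n ! := by
    intro k hk
    have hkn : 2 * k ≤ n := by have := mem_range.mp hk; omega
    rw [← Nat.sub_add_cancel hkn, pow_add, Nat.sub_add_cancel hkn, mul_assoc,
      Nat.mul_div_cancel' (four_pow_dvd_choose_mul_choose_mul_factorial hkn)]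
    ring
  apply Nat.eq_of_mul_eq_mul_left (pow_pos two_pos n)
  rw [mul_sum, sum_congr rfl hcancel, ← sum_mul, sum_choose_mul_choose_mul_two_pow,
    choose_two_mul_self_mul_factorial]
end

section
/- For every positive integer n, the sum over k from 1 to n of (2n-2)!! * (2k-3)!! / (2k-2)!! equals (2n-1)!!, where (-1)!! = 1 and (0)!! = 1. -/
/-!
Write `S m` for the sum with `n = m + 1`. Passing from `S m` to `S (m + 1)` multiplies every old
summand by `2m + 2` (the divisions are exact, since `(2j)‼ ∣ (2m)‼` for `j ≤ m`) and adds the new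
last summand `(2m + 1)‼`. So `S (m + 1) = (2m + 2) S m + (2m + 1)‼`, which is the recurrence
`(2m + 3)‼ = (2m + 3) (2m + 1)‼` satisfied by the right-hand side.
-/

open Nat Finset

theorem doubleFactorial_two_mul_dvd {j m : ℕ} (h : j ≤ m) : (2 * j)‼ ∣ (2 * m)‼ := by
  rw [doubleFactorial_two_mul, doubleFactorial_two_mul]
  exact mul_dvd_mul (pow_dvd_pow 2 h) (factorial_dvd_factorial h)

-- At `j = 0` the truncated `2 * 0 - 1 = 0` gives `0‼ = 1`, the value of `(-1)‼`.
theorem sum_range_doubleFactorial (m : ℕ) :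
    ∑ j ∈ range (m + 1), (2 * m)‼ * (2 * j - 1)‼ / (2 * j)‼ = (2 * m + 1)‼ := by
  induction m with
  | zero => rfl
  | succ m ih =>
    have scale : ∀ j ∈ range (m + 1), (2 * (m + 1))‼ * (2 * j - 1)‼ / (2 * j)‼
        = (2 * m + 2) * ((2 * m)‼ * (2 * j - 1)‼ / (2 * j)‼) := fun j hj => by
      have hdvd :=
        (doubleFactorial_two_mul_dvd (mem_range_succ_iff.mp hj)).mul_right (2 * j - 1)‼
      rw [Nat.mul_add_one, doubleFactorial_add_two, mul_assoc, Nat.mul_div_assoc _ hdvd]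
    rw [sum_range_succ, sum_congr rfl scale, ← mul_sum, ih,
      show 2 * (m + 1) - 1 = 2 * m + 1 by omega, Nat.mul_div_cancel_left _ (doubleFactorial_pos _),
      show 2 * (m + 1) + 1 = 2 * m + 1 + 2 by ring, doubleFactorial_add_two]
    ring

theorem stmt4 (n : ℕ) (hn : 0 < n) :
    ∑ k ∈ Finset.Icc 1 n, (2*n-2)‼ * (2*k-3)‼ / (2*k-2)‼ = (2*n-1)‼ := by
  obtain ⟨m, rfl⟩ := exists_add_one_eq.mpr hn
  rw [← Ico_add_one_right_eq_Icc, sum_Ico_eq_sum_range, add_tsub_cancel_right,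
    show 2 * (m + 1) - 2 = 2 * m by omega, show 2 * (m + 1) - 1 = 2 * m + 1 by omega,
    ← sum_range_doubleFactorial m]
  refine sum_congr rfl fun j _ => ?_
  rw [show 2 * (1 + j) - 3 = 2 * j - 1 by omega, show 2 * (1 + j) - 2 = 2 * j by omega]
end

section
/- For every positive integer n, (2n-2)!! + the sum over k from 2 to n of (2n-1)!! * (2k-4)!! / (2k-1)!! equals (2n-1)!!. -/
/-!
With `k = j + 2` and `S_n` the sum, passing from `n` to `n + 1` multiplies every old term of the sum by `2n + 3`
(the quotient is exact, since `(2j+3)‼ ∣ (2n+1)‼`), and the new term `j = n` equals `(2n)‼`.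
Hence `(2n+2)‼ + S_{n+1} = (2n+2)(2n)‼ + (2n)‼ + (2n+3) S_n = (2n+3)((2n)‼ + S_n)`,
which is the recursion `(2n+3)‼ = (2n+3)(2n+1)‼`.
-/

open Nat Finset

theorem Nat.doubleFactorial_dvd_add_two_mul (m j : ℕ) : m‼ ∣ (m + 2 * j)‼ := by
  induction j with
  | zero => rfl
  | succ j ih =>
    rw [show m + 2 * (j + 1) = m + 2 * j + 2 by ring, doubleFactorial_add_two]
    exact ih.mul_left _

theorem Nat.doubleFactorial_two_mul_add_three_dvd {j n : ℕ} (h : j < n) :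
    (2 * j + 3)‼ ∣ (2 * n + 1)‼ := by
  obtain ⟨d, rfl⟩ := Nat.exists_eq_add_of_lt h
  simpa only [show 2 * (j + d + 1) + 1 = 2 * j + 3 + 2 * d by ring] using
    doubleFactorial_dvd_add_two_mul (2 * j + 3) d

theorem sum_range_doubleFactorial_div_succ (n : ℕ) :
    ∑ j ∈ range (n + 1), (2 * n + 3)‼ * (2 * j)‼ / (2 * j + 3)‼ =
      (2 * n + 3) * ∑ j ∈ range n, (2 * n + 1)‼ * (2 * j)‼ / (2 * j + 3)‼ + (2 * n)‼ := by
  rw [sum_range_succ, Nat.mul_div_cancel_left _ (doubleFactorial_pos _), mul_sum]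
  congr 1
  refine sum_congr rfl fun j hj => ?_
  rw [doubleFactorial_add_two, mul_assoc,
    Nat.mul_div_assoc _ ((doubleFactorial_two_mul_add_three_dvd (mem_range.1 hj)).mul_right _)]

theorem doubleFactorial_two_mul_add_sum_range (n : ℕ) :
    (2 * n)‼ + ∑ j ∈ range n, (2 * n + 1)‼ * (2 * j)‼ / (2 * j + 3)‼ = (2 * n + 1)‼ := by
  induction n with
  | zero => rfl
  | succ n ih =>
    rw [show 2 * (n + 1) + 1 = 2 * n + 3 by ring, sum_range_doubleFactorial_div_succ,
      show 2 * (n + 1) = 2 * n + 2 by ring, doubleFactorial_add_two, doubleFactorial_add_two]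
    linear_combination (2 * n + 3) * ih

theorem stmt5_general (n : ℕ) :
    (2*n-2)‼ + ∑ k ∈ Finset.Icc 2 n, (2*n-1)‼ * (2*k-4)‼ / (2*k-1)‼ = (2*n-1)‼ := by
  rcases n with _ | n
  · rfl
  have reindex : ∑ k ∈ Icc 2 (n + 1), (2 * n + 1)‼ * (2 * k - 4)‼ / (2 * k - 1)‼ =
      ∑ j ∈ range n, (2 * n + 1)‼ * (2 * j)‼ / (2 * j + 3)‼ := by
    rw [← Ico_add_one_right_eq_Icc, sum_Ico_eq_sum_range, show n + 1 + 1 - 2 = n by omega]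
    refine sum_congr rfl fun j _ => ?_
    rw [show 2 * (2 + j) - 4 = 2 * j by omega, show 2 * (2 + j) - 1 = 2 * j + 3 by omega]
  rw [show 2 * (n + 1) - 2 = 2 * n by omega, show 2 * (n + 1) - 1 = 2 * n + 1 by omega, reindex]
  exact doubleFactorial_two_mul_add_sum_range n

theorem stmt5 (n : ℕ) (hn : 0 < n) :
    (2*n-2)‼ + ∑ k ∈ Finset.Icc 2 n, (2*n-1)‼ * (2*k-4)‼ / (2*k-1)‼ = (2*n-1)‼ :=
  stmt5_general n
end

section
/- For every positive integer n, the sum over k from 1 to n of k! * binomial(2n-k-1, k-1) * (2n-2k-1)!! equals (2n-1)!!, where (-1)!! = 1 and the convention binomial(-1,-1) = 1 is used for the term k = n. -/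
open Nat Finset

/-!
The sum telescopes from the top. Put `tail n k = k! * C(2n-k, k) * (2n-2k-1)‼`, which is
`(2n-k)! / (2n-2k)‼`. Pascal's rule together with `C(N, k+1) * (k+1) = C(N, k) * (N-k)` gives
`tail n k = term n k + tail n (k+1)` for `1 ≤ k ≤ n`, while `tail n (n+1) = 0` and
`tail n 1 = (2n-1)‼`.
-/

namespace DoubleFactorialSum

def term (n k : ℕ) : ℕ := k ! * (2*n-k-1).choose (k-1) * (2*n-2*k-1)‼

def tail (n k : ℕ) : ℕ := k ! * (2*n-k).choose k * (2*n-2*k-1)‼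

lemma tail_one {n : ℕ} (hn : 0 < n) : tail n 1 = (2*n-1)‼ := by
  obtain ⟨m, rfl⟩ := Nat.exists_eq_add_of_lt hn
  rw [tail, show 2*(0+m+1)-1 = 2*m+1 by omega, doubleFactorial_add_one]
  simp only [factorial_one, choose_one_right]
  congr 2 <;> omega

lemma tail_self_add_one (n : ℕ) : tail n (n+1) = 0 := by
  simp [tail, choose_eq_zero_of_lt (show 2*n-(n+1) < n+1 by omega)]

lemma tail_eq_term_add_tail {n k : ℕ} (hk : 0 < k) (hkn : k ≤ n) :
    tail n k = term n k + tail n (k+1) := by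
  obtain ⟨j, rfl⟩ : ∃ j, k = j + 1 := ⟨k - 1, by omega⟩
  obtain ⟨m, rfl⟩ : ∃ m, n = j + 1 + m := ⟨n - (j + 1), by omega⟩
  rcases m with _ | t
  · rw [tail, term, tail, show 2*(j+1+0)-(j+1)-1 = j by omega,
      show 2*(j+1+0)-(j+1) = j+1 by omega,
      choose_eq_zero_of_lt (show 2*(j+1+0)-(j+1+1) < j+1+1 by omega)]
    simp
  · have hpascal : (j+2*t+3).choose (j+1) = (j+2*t+2).choose j + (j+2*t+2).choose (j+1) :=
      choose_succ_succ _ _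
    have hratio : (j+2*t+2).choose (j+2) * (j+2) = (j+2*t+2).choose (j+1) * (2*t+1) := by
      rw [choose_succ_right_eq]; congr 2; omega
    rw [tail, term, tail, show 2*(j+1+(t+1))-(j+1)-1 = j+2*t+2 by omega,
      show 2*(j+1+(t+1))-(j+1) = j+2*t+3 by omega,
      show 2*(j+1+(t+1))-(j+1+1) = j+2*t+2 by omega,
      show 2*(j+1+(t+1))-2*(j+1)-1 = 2*t+1 by omega,
      show 2*(j+1+(t+1))-2*(j+1+1)-1 = 2*t-1 by omega, Nat.add_sub_cancel,
      doubleFactorial_add_one (2*t), factorial_succ (j+1), hpascal]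
    linear_combination (j+1)! * (2*t-1)‼ * hratio.symm

end DoubleFactorialSum

open DoubleFactorialSum in
theorem stmt7 (n : ℕ) (hn : 0 < n) :
    ∑ k ∈ Finset.Icc 1 n, k ! * (2*n-k-1).choose (k-1) * (2*n-2*k-1)‼ = (2*n-1)‼ := by
  have htelescope : ∀ k ∈ Icc 1 n, (term n k : ℤ) = -(tail n (k+1) - tail n k) := fun k hk => by
    rw [mem_Icc] at hk
    rw [tail_eq_term_add_tail hk.1 hk.2]; push_cast; ring
  change ∑ k ∈ Icc 1 n, term n k = _
  zify
  rw [sum_congr rfl htelescope, sum_neg_distrib,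
    sum_Icc_sub (show 1 ≤ n from hn) fun k => (tail n k : ℤ), tail_self_add_one, tail_one hn]
  simp
end

section
/- Let T = (x_{ij})_{1 ≤ i < j ≤ 2n} be an upper triangular array with constant rows, i.e. x_{ij} = x_i. Then the Hafnian Hf(T) = sum over perfect matching permutations (a,b) of the products x_{a(1)}···x_{a(n)} equals the sum over all increasing sequences a = (a(1),...,a(n)) with a(1) < a(2) < ··· < a(n) and 1 ≤ a(i) ≤ 2i-1, of the products ∏_{i=1}^n (2i - a(i)) x_{a(i)}. -/
/-!
Group the perfect matching permutations by their first row `a` (indices start at 0 here). In a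
matching the values below `a i` are among the `2 i` entries `a j`, `b j` with `j < i`, so
`a i ≤ 2 i`. For fixed `a`, the completions `b` are the injective `b` with `b i` in the set `C i`
of values above `a i` missed by `a`. The `C i` decrease with `i`, so choosing `b (n-1), …, b 0`
in turn leaves `#(C i) - (n - 1 - i) = 2 i + 1 - a i` choices for `b i`.
-/

open Finset Function

section InjectiveTuples

variable {α : Type*} [DecidableEq α]

def injectiveTupleSnocEquiv {n : ℕ} (A : Fin (n + 1) → Finset α) :
    {b : Fin (n + 1) → α // Injective b ∧ ∀ i, b i ∈ A i} ≃
      Σ v : A (Fin.last n),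
        {c : Fin n → α // Injective c ∧ ∀ i, c i ∈ (A i.castSucc).erase v} where
  toFun b := ⟨⟨b.1 (Fin.last n), b.2.2 _⟩, Fin.init b.1,
    b.2.1.comp (Fin.castSucc_injective n),
    fun i => mem_erase.2 ⟨b.2.1.ne (Fin.castSucc_lt_last i).ne, b.2.2 _⟩⟩
  invFun vc := ⟨Fin.snoc vc.2.1 vc.1.1,
    Fin.snoc_injective_iff.2 ⟨vc.2.2.1, fun ⟨i, hi⟩ => ne_of_mem_erase (vc.2.2.2 i) hi⟩,
    Fin.lastCases (by simp) fun i => by simpa using mem_of_mem_erase (vc.2.2.2 i)⟩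
  left_inv b := Subtype.ext (Fin.snoc_init_self b.1)
  right_inv vc := by
    refine Sigma.ext (by simp) ((Subtype.heq_iff_coe_eq fun c => ?_).2 ?_)
    · simp
    · simp [Fin.init_snoc]

theorem card_injective_mem_of_antitone [Fintype α] :
    ∀ (n : ℕ) (A : Fin n → Finset α), Antitone A →
    Fintype.card {b : Fin n → α // Injective b ∧ ∀ i, b i ∈ A i}
      = ∏ i : Fin n, (#(A i) - (n - 1 - i))
  | 0, A, _ => by simp [Fintype.card_subtype, injective_of_subsingleton]
  | n + 1, A, hA => by
    rw [Fintype.card_congr (injectiveTupleSnocEquiv A), Fintype.card_sigma]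
    have hfiber (v : A (Fin.last n)) :
        Fintype.card {c : Fin n → α // Injective c ∧ ∀ i, c i ∈ (A i.castSucc).erase v}
          = ∏ i : Fin n, (#(A i.castSucc) - (n - i)) := by
      rw [card_injective_mem_of_antitone n _ fun i j hij => erase_subset_erase _ (hA hij)]
      refine prod_congr rfl fun i _ => ?_
      rw [card_erase_of_mem (hA (Fin.le_last _) v.2)]
      omega
    rw [Fintype.sum_congr _ _ hfiber, sum_const, Finset.card_univ, Fintype.card_coe,
      Fin.prod_univ_castSucc]
    simp [mul_comm]

end InjectiveTuples

section PerfectMatchings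

variable {n : ℕ}

theorem val_le_two_mul_of_surjective_sumElim {m : ℕ} {a b : Fin n → Fin m}
    (hab : ∀ i, a i < b i) (ha : StrictMono a) (hsurj : Surjective (Sum.elim a b)) (i : Fin n) :
    (a i : ℕ) ≤ 2 * i := by
  have hsub : Iio (a i) ⊆ ((Iio i).disjSum (Iio i)).image (Sum.elim a b) := by
    intro v hv
    obtain ⟨j | j, rfl⟩ := hsurj v
    · exact mem_image_of_mem _ (by simpa [ha.lt_iff_lt] using hv)
    · exact mem_image_of_mem _ (by simpa [← ha.lt_iff_lt] using (hab j).trans (mem_Iio.1 hv))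
  calc (a i : ℕ) = #(Iio (a i)) := (Fin.card_Iio _).symm
    _ ≤ #((Iio i).disjSum (Iio i)) := (card_le_card hsub).trans card_image_le
    _ = 2 * i := by simp [two_mul]

def partnerCandidates (a : Fin n → Fin (2 * n)) (i : Fin n) : Finset (Fin (2 * n)) :=
  Ioi (a i) \ (Ioi i).image a

variable {a : Fin n → Fin (2 * n)}

theorem mem_partnerCandidates (ha : StrictMono a) {i : Fin n} {v : Fin (2 * n)} :
    v ∈ partnerCandidates a i ↔ a i < v ∧ ∀ j, a j ≠ v := by
  simp only [partnerCandidates, mem_sdiff, mem_Ioi, mem_image, not_exists, not_and]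
  refine and_congr_right fun hv => ⟨fun h j => ?_, fun h j _ => h j⟩
  rcases lt_or_ge i j with hij | hji
  · exact h j hij
  · exact ((ha.monotone hji).trans_lt hv).ne

theorem antitone_partnerCandidates (ha : StrictMono a) : Antitone (partnerCandidates a) :=
  fun i j hij v hv => by
    rw [mem_partnerCandidates ha] at hv ⊢
    exact ⟨(ha.monotone hij).trans_lt hv.1, hv.2⟩

theorem card_partnerCandidates (ha : StrictMono a) (i : Fin n) :
    #(partnerCandidates a i) = 2 * n - 1 - a i - (n - 1 - i) := by
  have hsub : (Ioi i).image a ⊆ Ioi (a i) := fun v hv => by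
    obtain ⟨j, hj, rfl⟩ := mem_image.1 hv
    exact mem_Ioi.2 (ha (mem_Ioi.1 hj))
  rw [partnerCandidates, card_sdiff_of_subset hsub, card_image_of_injective _ ha.injective,
    Fin.card_Ioi, Fin.card_Ioi]

theorem lt_and_bijective_sumElim_iff (ha : StrictMono a) {b : Fin n → Fin (2 * n)} :
    ((∀ i, a i < b i) ∧ Bijective (Sum.elim a b)) ↔
      Injective b ∧ ∀ i, b i ∈ partnerCandidates a i := by
  simp only [mem_partnerCandidates ha, Fintype.bijective_iff_injective_and_card,
    Sum.elim_injective, Fintype.card_sum, Fintype.card_fin, two_mul, and_true, forall_and]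
  exact ⟨fun ⟨hlt, _, hb, hab⟩ => ⟨hb, hlt, fun i j => hab j i⟩,
    fun ⟨hb, hlt, hab⟩ => ⟨hlt, ha.injective, hb, fun i j => hab j i⟩⟩

theorem card_completions (ha : StrictMono a) (hle : ∀ i : Fin n, (a i : ℕ) ≤ 2 * i) :
    Fintype.card {b : Fin n → Fin (2 * n) // (∀ i, a i < b i) ∧ Bijective (Sum.elim a b)}
      = ∏ i : Fin n, (2 * (i : ℕ) + 1 - a i) := by
  rw [Fintype.card_congr (Equiv.subtypeEquivRight fun b => lt_and_bijective_sumElim_iff ha),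
    card_injective_mem_of_antitone n _ (antitone_partnerCandidates ha)]
  refine prod_congr rfl fun i _ => ?_
  rw [card_partnerCandidates ha]
  have := hle i
  omega

def matchingEquivSigma (n : ℕ) :
    {p : (Fin n → Fin (2 * n)) × (Fin n → Fin (2 * n)) //
        (∀ i, p.1 i < p.2 i) ∧ StrictMono p.1 ∧ Bijective (Sum.elim p.1 p.2)} ≃
      Σ a : {a : Fin n → Fin (2 * n) // StrictMono a ∧ ∀ i : Fin n, (a i : ℕ) ≤ 2 * i},
        {b : Fin n → Fin (2 * n) // (∀ i, a.1 i < b i) ∧ Bijective (Sum.elim a.1 b)} where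
  toFun p := ⟨⟨p.1.1, p.2.2.1,
    val_le_two_mul_of_surjective_sumElim p.2.1 p.2.2.1 p.2.2.2.surjective⟩, p.1.2, p.2.1, p.2.2.2⟩
  invFun s := ⟨(s.1.1, s.2.1), s.2.2.1, s.1.2.1, s.2.2.2⟩
  left_inv _ := rfl
  right_inv _ := rfl

end PerfectMatchings

theorem stmt14 {R : Type*} [CommRing R] (n : ℕ) (x : Fin (2*n) → R) :
    ∑ᶠ p : {p : (Fin n → Fin (2*n)) × (Fin n → Fin (2*n)) //
        (∀ i, p.1 i < p.2 i) ∧ StrictMono p.1 ∧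
        Function.Bijective (Sum.elim p.1 p.2)},
      ∏ i : Fin n, x (p.1.1 i)
    = ∑ᶠ a : {a : Fin n → Fin (2*n) // StrictMono a ∧ ∀ i : Fin n, (a i : ℕ) ≤ 2*(i:ℕ)},
      ∏ i : Fin n, ((2*(i:ℕ) + 1 - (a.1 i : ℕ) : ℕ) : R) * x (a.1 i) := by
  rw [finsum_eq_sum_of_fintype, finsum_eq_sum_of_fintype,
    ← (matchingEquivSigma n).symm.sum_comp, Fintype.sum_sigma]
  refine Fintype.sum_congr _ _ fun a => ?_
  change ∑ _b, ∏ i, x (a.1 i) = _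
  rw [sum_const, Finset.card_univ, card_completions a.2.1 a.2.2, nsmul_eq_mul, Nat.cast_prod,
    prod_mul_distrib]
end

section
/- Let T = (x_{ij})_{1 ≤ i < j ≤ 2n} be an upper triangular array with constant rows x_{ij} = x_i. Then the Pfaffian Pf(T) = sum over perfect matching permutations (a,b) of sgn((a,b)) · x_{a(1)}···x_{a(n)} equals x_1 · x_3 · x_5 ··· x_{2n-1}. -/
/-!
Write `a(i) = p (2i)`, `b(i) = p (2i + 1)`. The weight `∏ x_{a(i)}` only sees the `a`'s, so
it suffices to find a sign-reversing involution fixing `a` on all matchings but the identity.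
Call pairs `k`, `k + 1` overlapping when `a(k + 1) < b(k)`; swapping `b(k)` and `b(k + 1)` at the
first overlap is such an involution. Without any overlap, `a(0) < b(0) < a(1) < b(1) < ⋯`, so
`p` is monotone and hence the identity.
-/

open Finset Equiv

lemma Fin.strictMono_of_lt_of_val_eq_succ {N : ℕ} {α : Type*} [Preorder α] {f : Fin N → α}
    (h : ∀ m m' : Fin N, (m' : ℕ) = m + 1 → f m < f m') : StrictMono f := by
  cases N with
  | zero => exact fun m => m.elim0
  | succ N => exact Fin.strictMono_iff_lt_succ.2 fun i => h _ _ (by simp)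

lemma Equiv.Perm.eq_one_of_strictMono {α : Type*} [LinearOrder α] [WellFoundedLT α]
    {p : Perm α} (hp : StrictMono p) : p = 1 :=
  DFunLike.coe_injective <| (hp.range_inj strictMono_id).1 (by simp)

namespace MatchingPerm

variable {n : ℕ}

def aPos (i : Fin n) : Fin (2 * n) := ⟨2 * i, by omega⟩

def bPos (i : Fin n) : Fin (2 * n) := ⟨2 * i + 1, by omega⟩

lemma aPos_ne_bPos (i j : Fin n) : aPos i ≠ bPos j := by
  simp only [aPos, bPos, ne_eq, Fin.mk.injEq]; omega

lemma bPos_injective : Function.Injective (bPos (n := n)) := by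
  intro i j h; simp only [bPos, Fin.mk.injEq] at h; omega

lemma exists_eq_aPos_or_eq_bPos (m : Fin (2 * n)) : ∃ i, m = aPos i ∨ m = bPos i :=
  ⟨⟨m / 2, by omega⟩, by simp only [aPos, bPos, Fin.ext_iff]; omega⟩

/-- `p` lists a perfect matching as `p (aPos i) = a(i)`, `p (bPos i) = b(i)`. -/
def IsMatchingPerm (p : Perm (Fin (2 * n))) : Prop :=
  (∀ i, p (aPos i) < p (bPos i)) ∧ StrictMono fun i => p (aPos i)

instance : DecidablePred (IsMatchingPerm (n := n)) := fun p => by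
  unfold IsMatchingPerm StrictMono; infer_instance

lemma isMatchingPerm_one : IsMatchingPerm (1 : Perm (Fin (2 * n))) :=
  ⟨fun i => by simp [aPos, bPos, Fin.lt_def],
    fun i j h => by simp only [Perm.one_apply, aPos, Fin.lt_def] at h ⊢; omega⟩

/-- The pairs `k` and `k + 1` cross or nest, i.e. `a(k + 1) < b(k)`. -/
def Overlaps (p : Perm (Fin (2 * n))) (k : ℕ) : Prop :=
  ∃ h : k + 1 < n, p (aPos ⟨k + 1, h⟩) < p (bPos ⟨k, by omega⟩)

lemma not_overlaps_one (k : ℕ) : ¬Overlaps (1 : Perm (Fin (2 * n))) k := by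
  rintro ⟨_, h⟩
  simp [aPos, bPos, Fin.lt_def] at h

lemma IsMatchingPerm.eq_one {p : Perm (Fin (2 * n))} (hp : IsMatchingPerm p)
    (h : ∀ k, ¬Overlaps p k) : p = 1 := by
  refine Perm.eq_one_of_strictMono <| Fin.strictMono_of_lt_of_val_eq_succ fun m m' hm => ?_
  obtain ⟨i, rfl | rfl⟩ := exists_eq_aPos_or_eq_bPos m
  · obtain rfl : m' = bPos i := Fin.ext hm
    exact hp.1 i
  · have hi : (i : ℕ) + 1 < n := by have := m'.isLt; simp only [bPos] at hm; omega
    obtain rfl : m' = aPos ⟨i + 1, hi⟩ := by simp only [aPos, bPos, Fin.ext_iff] at hm ⊢; omega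
    refine lt_of_le_of_ne (not_lt.1 fun hlt => h i ⟨hi, hlt⟩) ?_
    exact p.injective.ne (aPos_ne_bPos _ _).symm

/-- `p * swapNext k hk` exchanges `b(k)` and `b(k + 1)`. -/
def swapNext (k : ℕ) (hk : k + 1 < n) : Perm (Fin (2 * n)) :=
  swap (bPos ⟨k, by omega⟩) (bPos ⟨k + 1, hk⟩)

section swapNext

variable {p : Perm (Fin (2 * n))} {k : ℕ} {hk : k + 1 < n}

@[simp]
lemma mul_swapNext_apply_aPos (i : Fin n) : (p * swapNext k hk) (aPos i) = p (aPos i) := by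
  rw [Perm.mul_apply, swapNext, swap_apply_of_ne_of_ne (aPos_ne_bPos _ _) (aPos_ne_bPos _ _)]

lemma mul_swapNext_apply_bPos_of_ne (i : Fin n) (h₁ : (i : ℕ) ≠ k) (h₂ : (i : ℕ) ≠ k + 1) :
    (p * swapNext k hk) (bPos i) = p (bPos i) := by
  rw [Perm.mul_apply, swapNext, swap_apply_of_ne_of_ne] <;>
    exact bPos_injective.ne (by simp [Fin.ext_iff, *])

lemma sign_mul_swapNext : Perm.sign (p * swapNext k hk) = -Perm.sign p := by
  rw [Perm.sign_mul, swapNext, Perm.sign_swap (bPos_injective.ne (by simp [Fin.ext_iff])),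
    mul_neg_one]

lemma mul_swapNext_ne : p * swapNext k hk ≠ p := by
  intro h
  have := congrArg (· (bPos ⟨k, by omega⟩)) h
  simp only [Perm.mul_apply, swapNext, swap_apply_left] at this
  exact absurd (bPos_injective (p.injective this)) (by simp [Fin.ext_iff])

lemma IsMatchingPerm.mul_swapNext (hp : IsMatchingPerm p)
    (hov : p (aPos ⟨k + 1, hk⟩) < p (bPos ⟨k, by omega⟩)) :
    IsMatchingPerm (p * swapNext k hk) := by
  refine ⟨fun i => ?_, by simpa using hp.2⟩
  rw [mul_swapNext_apply_aPos]
  by_cases h₁ : (i : ℕ) = k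
  · subst h₁
    rw [Perm.mul_apply, swapNext, swap_apply_left]
    exact (hp.2 (show i < ⟨i + 1, hk⟩ by simp [Fin.lt_def])).trans (hp.1 _)
  by_cases h₂ : (i : ℕ) = k + 1
  · obtain rfl : i = ⟨k + 1, hk⟩ := Fin.ext h₂
    rwa [Perm.mul_apply, swapNext, swap_apply_right]
  · rw [mul_swapNext_apply_bPos_of_ne i h₁ h₂]
    exact hp.1 i

end swapNext

open Classical in
noncomputable def swapFirstOverlap (p : Perm (Fin (2 * n))) : Perm (Fin (2 * n)) :=
  if h : ∃ k, Overlaps p k then p * swapNext (Nat.find h) (Nat.find_spec h).1 else p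

section swapFirstOverlap

variable {p : Perm (Fin (2 * n))}

lemma swapFirstOverlap_of_forall_not_overlaps (h : ∀ k, ¬Overlaps p k) :
    swapFirstOverlap p = p :=
  dif_neg (not_exists.2 h)

lemma swapFirstOverlap_eq_mul_swapNext {k : ℕ} (hk : k + 1 < n)
    (hov : p (aPos ⟨k + 1, hk⟩) < p (bPos ⟨k, by omega⟩)) (hmin : ∀ l < k, ¬Overlaps p l) :
    swapFirstOverlap p = p * swapNext k hk := by
  classical
  have h : ∃ k, Overlaps p k := ⟨k, hk, hov⟩
  have hfind : Nat.find h = k := (Nat.find_eq_iff h).2 ⟨⟨hk, hov⟩, hmin⟩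
  rw [swapFirstOverlap, dif_pos h]
  subst hfind
  rfl

lemma exists_swapFirstOverlap_eq_mul_swapNext (h : ∃ k, Overlaps p k) :
    ∃ k, ∃ hk : k + 1 < n, p (aPos ⟨k + 1, hk⟩) < p (bPos ⟨k, by omega⟩) ∧
      (∀ l < k, ¬Overlaps p l) ∧ swapFirstOverlap p = p * swapNext k hk := by
  classical
  obtain ⟨hk, hov⟩ := Nat.find_spec h
  have hmin : ∀ l < Nat.find h, ¬Overlaps p l := fun l hl => Nat.find_min h hl
  exact ⟨_, hk, hov, hmin, swapFirstOverlap_eq_mul_swapNext hk hov hmin⟩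

lemma swapFirstOverlap_apply_aPos (i : Fin n) : swapFirstOverlap p (aPos i) = p (aPos i) := by
  by_cases h : ∃ k, Overlaps p k
  · obtain ⟨k, hk, -, -, hswap⟩ := exists_swapFirstOverlap_eq_mul_swapNext h
    rw [hswap, mul_swapNext_apply_aPos]
  · rw [swapFirstOverlap_of_forall_not_overlaps (not_exists.1 h)]

lemma sign_swapFirstOverlap (h : ∃ k, Overlaps p k) :
    Perm.sign (swapFirstOverlap p) = -Perm.sign p := by
  obtain ⟨k, hk, -, -, hswap⟩ := exists_swapFirstOverlap_eq_mul_swapNext h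
  rw [hswap, sign_mul_swapNext]

lemma swapFirstOverlap_ne (h : ∃ k, Overlaps p k) : swapFirstOverlap p ≠ p := by
  obtain ⟨k, hk, -, -, hswap⟩ := exists_swapFirstOverlap_eq_mul_swapNext h
  rw [hswap]
  exact mul_swapNext_ne

lemma isMatchingPerm_swapFirstOverlap (hp : IsMatchingPerm p) :
    IsMatchingPerm (swapFirstOverlap p) := by
  by_cases h : ∃ k, Overlaps p k
  · obtain ⟨k, hk, hov, -, hswap⟩ := exists_swapFirstOverlap_eq_mul_swapNext h
    rw [hswap]
    exact hp.mul_swapNext hov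
  · rwa [swapFirstOverlap_of_forall_not_overlaps (not_exists.1 h)]

/-- After the swap, `k` is still the first overlap: `a` is unchanged, `b(l)` is unchanged for
`l < k`, and `b(k)` becomes `b(k + 1) > a(k + 1)`. -/
lemma swapFirstOverlap_swapFirstOverlap (hp : IsMatchingPerm p) :
    swapFirstOverlap (swapFirstOverlap p) = p := by
  by_cases h : ∃ k, Overlaps p k
  · obtain ⟨k, hk, -, hmin, hswap⟩ := exists_swapFirstOverlap_eq_mul_swapNext h
    set q := p * swapNext k hk
    have hov : q (aPos ⟨k + 1, hk⟩) < q (bPos ⟨k, by omega⟩) := by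
      rw [mul_swapNext_apply_aPos, Perm.mul_apply, swapNext, swap_apply_left]
      exact hp.1 _
    have hmin' : ∀ l < k, ¬Overlaps q l := by
      rintro l hl ⟨hl', hov⟩
      rw [mul_swapNext_apply_aPos,
        mul_swapNext_apply_bPos_of_ne _ (by simp; omega) (by simp; omega)] at hov
      exact hmin l hl ⟨hl', hov⟩
    rw [hswap, swapFirstOverlap_eq_mul_swapNext hk hov hmin', mul_assoc, swapNext, swap_mul_self,
      mul_one]
  · rw [swapFirstOverlap_of_forall_not_overlaps (not_exists.1 h),
      swapFirstOverlap_of_forall_not_overlaps (not_exists.1 h)]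

end swapFirstOverlap

theorem sum_sign_smul_eq {M : Type*} [AddCommGroup M] (F : (Fin n → Fin (2 * n)) → M) :
    ∑ p with IsMatchingPerm p, Perm.sign p • F (p ∘ aPos) = F aPos := by
  have hone : (1 : Perm (Fin (2 * n))) ∈ ({p | IsMatchingPerm p} : Finset _) := by
    simp [isMatchingPerm_one]
  rw [← add_sum_erase _ _ hone, Perm.sign_one, one_smul, Perm.coe_one, Function.id_comp,
    add_eq_left]
  have hmem {p : Perm (Fin (2 * n))} :
      p ∈ ({p | IsMatchingPerm p} : Finset _).erase 1 ↔ p ≠ 1 ∧ IsMatchingPerm p := by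
    simp
  have hov {p} (hp : p ∈ ({p | IsMatchingPerm p} : Finset _).erase 1) : ∃ k, Overlaps p k :=
    not_forall_not.1 fun h => (hmem.1 hp).1 ((hmem.1 hp).2.eq_one h)
  refine sum_involution (fun p _ => swapFirstOverlap p) (fun p hp => ?_)
    (fun p hp _ => swapFirstOverlap_ne (hov hp)) (fun p hp => ?_)
    (fun p hp => swapFirstOverlap_swapFirstOverlap (hmem.1 hp).2)
  · have ha : ⇑(swapFirstOverlap p) ∘ aPos = ⇑p ∘ aPos := funext swapFirstOverlap_apply_aPos
    rw [sign_swapFirstOverlap (hov hp), ha, Units.neg_smul, add_neg_cancel]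
  · obtain ⟨hp1, hp⟩ := hmem.1 hp
    refine hmem.2 ⟨fun h => hp1 ?_, isMatchingPerm_swapFirstOverlap hp⟩
    rw [← swapFirstOverlap_swapFirstOverlap hp, h,
      swapFirstOverlap_of_forall_not_overlaps not_overlaps_one]

end MatchingPerm

open MatchingPerm

theorem stmt15 {R : Type*} [CommRing R] (n : ℕ) (x : Fin (2*n) → R) :
    ∑ᶠ p : {p : Equiv.Perm (Fin (2*n)) //
        (∀ i : Fin n, p ⟨2*(i:ℕ), by have := i.isLt; omega⟩
            < p ⟨2*(i:ℕ)+1, by have := i.isLt; omega⟩) ∧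
        (∀ i j : Fin n, i < j →
          p ⟨2*(i:ℕ), by have := i.isLt; omega⟩ < p ⟨2*(j:ℕ), by have := j.isLt; omega⟩)},
      ((Equiv.Perm.sign (p : Equiv.Perm (Fin (2*n))) : ℤ) : R) *
        ∏ i : Fin n, x ((p : Equiv.Perm (Fin (2*n))) ⟨2*(i:ℕ), by have := i.isLt; omega⟩)
    = ∏ i : Fin n, x ⟨2*(i:ℕ), by have := i.isLt; omega⟩ := by
  rw [finsum_eq_sum_of_fintype]
  refine (sum_subtype {p | IsMatchingPerm p} (fun p => by simp; rfl)
    fun p => ((Perm.sign p : ℤ) : R) * ∏ i, x (p (aPos i))).symm.trans ?_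
  have key := sum_sign_smul_eq fun a => ∏ i, x (a i)
  simp only [Units.smul_def, zsmul_eq_mul, Function.comp_apply] at key
  exact key
end

section
/- For all nonnegative integers n and m, the sum over j from 0 to n of binomial(j+2m, j) * 2^j * binomial(2n-j, n-j) equals binomial(n+m, n) * 4^n. -/
/-! A Wilf–Zeilberger argument. Writing `F n j` for the summand, the certificate
`G n j = j * C(j+2m, j) 2^j C(2n+1-j, n+1-j)` satisfies
`(n+1) F (n+1) j + G n (j+1) = 4(n+m+1) F n j + G n j`, so summing over `j` telescopes to
`(n+1) S (n+1) = 4(n+m+1) S n` for the sum `S`. The right-hand side `C(n+m, n) 4^n` satisfies the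
same first-order recurrence, and both sides equal `1` at `n = 0`. -/

open Nat Finset

theorem Finset.sum_range_add_of_add_succ_eq {M : Type*} [AddCommMonoid M] {a b g : ℕ → M}
    {n : ℕ} (h : ∀ j < n, a j + g (j + 1) = b j + g j) :
    ∑ j ∈ range n, a j + g n = ∑ j ∈ range n, b j + g 0 := by
  induction n with
  | zero => simp
  | succ n ih =>
    rw [sum_range_succ, sum_range_succ, add_assoc, h n n.lt_succ_self, ← add_assoc,
      add_right_comm, ih fun j hj => h j (by omega), add_right_comm]

/-- The contiguous relation behind the certificate; with `n = j + a` it reads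
`(n+1) C(2n+2-j, n+1-j) = 2(2n+1-j) C(2n-j, n-j) + j C(2n+1-j, n+1-j)`. -/
theorem Nat.add_succ_mul_choose_add_two (j a : ℕ) :
    (j + a + 1) * (j + 2 * a + 2).choose (a + 1)
      = 2 * (j + 2 * a + 1) * (j + 2 * a).choose a + j * (j + 2 * a + 1).choose (a + 1) := by
  apply Nat.eq_of_mul_eq_mul_left a.succ_pos
  have h₁ := Nat.add_one_mul_choose_eq (j + 2 * a + 1) a
  have h₂ := Nat.add_one_mul_choose_eq (j + 2 * a) a
  have h₃ := Nat.choose_mul_succ_eq (j + 2 * a) a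
  rw [show j + 2 * a + 1 - a = j + a + 1 by omega] at h₃
  zify at h₁ h₂ h₃ ⊢
  linear_combination (-((j : ℤ) + a + 1)) * h₁ + (j : ℤ) * h₂ + (-((j : ℤ) + 2 * a + 2)) * h₃

namespace CentralBinomialSum

variable (m : ℕ)

def summand (n j : ℕ) : ℕ := (j + 2 * m).choose j * 2 ^ j * (2 * n - j).choose (n - j)

def certificate (n j : ℕ) : ℕ :=
  j * ((j + 2 * m).choose j * 2 ^ j * (2 * n + 1 - j).choose (n + 1 - j))

theorem summand_recurrence {n j : ℕ} (h : j ≤ n) :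
    (n + 1) * summand m (n + 1) j + certificate m n (j + 1)
      = 4 * (n + m + 1) * summand m n j + certificate m n j := by
  obtain ⟨a, rfl⟩ := Nat.exists_eq_add_of_le h
  simp only [summand, certificate]
  rw [show 2 * (j + a) - j = j + 2 * a by omega, show j + a - j = a by omega,
    show 2 * (j + a + 1) - j = j + 2 * a + 2 by omega, show j + a + 1 - j = a + 1 by omega,
    show 2 * (j + a) + 1 - j = j + 2 * a + 1 by omega,
    show 2 * (j + a) + 1 - (j + 1) = j + 2 * a by omega,
    show j + a + 1 - (j + 1) = a by omega, show j + 1 + 2 * m = j + 2 * m + 1 by omega]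
  have hcontig := Nat.add_succ_mul_choose_add_two j a
  have hpascal := Nat.add_one_mul_choose_eq (j + 2 * m) j
  zify at hcontig hpascal ⊢
  linear_combination (2 ^ j * ((j + 2 * m).choose j : ℤ)) * hcontig
    - (2 ^ (j + 1) * ((j + 2 * a).choose a : ℤ)) * hpascal

theorem certificate_last (n : ℕ) :
    certificate m n (n + 1) = (n + 1) * summand m (n + 1) (n + 1) := by
  simp [certificate, summand, show 2 * n + 1 - (n + 1) = n by omega,
    show 2 * (n + 1) - (n + 1) = n + 1 by omega]

theorem sum_summand_recurrence (n : ℕ) :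
    (n + 1) * ∑ j ∈ range (n + 2), summand m (n + 1) j
      = 4 * (n + m + 1) * ∑ j ∈ range (n + 1), summand m n j := by
  have htelescope := Finset.sum_range_add_of_add_succ_eq
    (a := fun j => (n + 1) * summand m (n + 1) j) (b := fun j => 4 * (n + m + 1) * summand m n j)
    (g := certificate m n) (n := n + 1) fun j hj => summand_recurrence m (by omega)
  rw [certificate_last] at htelescope
  simp only [certificate, zero_mul, add_zero] at htelescope
  rw [sum_range_succ, mul_add, mul_sum, mul_sum, htelescope]

theorem choose_mul_four_pow_recurrence (n : ℕ) :
    (n + 1) * ((n + 1 + m).choose (n + 1) * 4 ^ (n + 1))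
      = 4 * (n + m + 1) * ((n + m).choose n * 4 ^ n) := by
  have hpascal := Nat.add_one_mul_choose_eq (n + m) n
  rw [show n + 1 + m = n + m + 1 by omega]
  linear_combination (4 * 4 ^ n) * hpascal.symm

end CentralBinomialSum

open CentralBinomialSum in
theorem stmt16 (n m : ℕ) :
    ∑ j ∈ Finset.range (n+1), (j+2*m).choose j * 2^j * (2*n-j).choose (n-j)
      = (n+m).choose n * 4^n := by
  change ∑ j ∈ range (n + 1), summand m n j = _
  induction n with
  | zero => simp [summand]
  | succ n ih =>
    apply Nat.eq_of_mul_eq_mul_left n.succ_pos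
    rw [sum_summand_recurrence, ih, choose_mul_four_pow_recurrence]
end

section
/- For all nonnegative integers m and n, the integer n! * (2m)! * (n+m)! divides m! * (2m+2n)!; equivalently, m!(2m+2n)!/((2m)! n! (m+n)!) is a nonnegative integer. -/
/-!
By Legendre's formula, `∏ (aᵢ)! ∣ ∏ (bⱼ)!` as soon as `∑ ⌊aᵢ/q⌋ ≤ ∑ ⌊bⱼ/q⌋` for every `q > 0`
(it suffices to take prime powers `q`). For the theorem this is the floor inequality
`⌊n/q⌋ + ⌊2m/q⌋ + ⌊(n+m)/q⌋ ≤ ⌊m/q⌋ + ⌊(2m+2n)/q⌋`; both sides change by the same amount when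
`m` or `n` grows by `q`, so only residues `r, s < q` matter, and there it is a check of cases
on whether `r + s ≥ q`.
-/

open Nat Finset

theorem prod_factorial_dvd_prod_factorial_of_sum_div_le {ι κ : Type*} (s : Finset ι) (t : Finset κ)
    (a : ι → ℕ) (b : κ → ℕ) (h : ∀ q, 0 < q → ∑ i ∈ s, a i / q ≤ ∑ j ∈ t, b j / q) :
    ∏ i ∈ s, (a i)! ∣ ∏ j ∈ t, (b j)! := by
  rw [← factorization_prime_le_iff_dvd (prod_ne_zero_iff.2 fun i _ => factorial_ne_zero _)
    (prod_ne_zero_iff.2 fun j _ => factorial_ne_zero _)]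
  intro p hp
  set N := s.sup a ⊔ t.sup b
  have hlog : ∀ x ≤ N, log p x < N + 1 := fun x hx => lt_succ_of_le ((log_le_self p x).trans hx)
  rw [factorization_prod fun i _ => factorial_ne_zero _,
    factorization_prod fun j _ => factorial_ne_zero _, Finset.sum_apply', Finset.sum_apply']
  calc ∑ i ∈ s, (a i)!.factorization p
      = ∑ k ∈ Ico 1 (N + 1), ∑ i ∈ s, a i / p ^ k := by
        rw [sum_comm]
        exact sum_congr rfl fun i hi =>
          factorization_factorial hp (hlog _ (le_sup_of_le_left (le_sup hi)))
    _ ≤ ∑ k ∈ Ico 1 (N + 1), ∑ j ∈ t, b j / p ^ k :=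
        sum_le_sum fun k _ => h _ (pow_pos hp.pos k)
    _ = ∑ j ∈ t, (b j)!.factorization p := by
        rw [sum_comm]
        exact sum_congr rfl fun j hj =>
          (factorization_factorial hp (hlog _ (le_sup_of_le_right (le_sup hj)))).symm

theorem two_mul_div_add_add_div_le_of_lt {q r s : ℕ} (hr : r < q) (hs : s < q) :
    2 * r / q + (r + s) / q ≤ (2 * r + 2 * s) / q := by
  have hq : 0 < q := by omega
  rcases lt_or_ge (r + s) q with h | h
  · rw [Nat.div_eq_of_lt h, add_zero]
    exact Nat.div_le_div_right (by omega)
  · have h2r : 2 * r / q < 2 := (Nat.div_lt_iff_lt_mul hq).2 (by omega)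
    have hrs : (r + s) / q < 2 := (Nat.div_lt_iff_lt_mul hq).2 (by omega)
    have h2rs : 2 ≤ (2 * r + 2 * s) / q := (Nat.le_div_iff_mul_le hq).2 (by omega)
    omega

theorem div_add_div_add_div_le {q : ℕ} (hq : 0 < q) (m n : ℕ) :
    n / q + 2 * m / q + (n + m) / q ≤ m / q + (2 * m + 2 * n) / q := by
  obtain ⟨a, r, hr, rfl⟩ : ∃ a r, r < q ∧ m = r + q * a :=
    ⟨m / q, m % q, mod_lt _ hq, (mod_add_div m q).symm⟩
  obtain ⟨b, s, hs, rfl⟩ : ∃ b s, s < q ∧ n = s + q * b :=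
    ⟨n / q, n % q, mod_lt _ hq, (mod_add_div n q).symm⟩
  have hrs := two_mul_div_add_add_div_le_of_lt hr hs
  rw [show 2 * (r + q * a) = 2 * r + q * (2 * a) by ring,
    show s + q * b + (r + q * a) = (r + s) + q * (a + b) by ring,
    show 2 * r + q * (2 * a) + 2 * (s + q * b) = (2 * r + 2 * s) + q * (2 * (a + b)) by ring]
  simp only [add_mul_div_left _ _ hq, div_eq_of_lt hr, div_eq_of_lt hs]
  omega

theorem stmt18 (m n : ℕ) :
    (n ! * ((2*m)! * (n+m)!)) ∣ (m ! * (2*m+2*n)!) := by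
  simpa [Fin.prod_univ_three, mul_assoc] using
    prod_factorial_dvd_prod_factorial_of_sum_div_le univ univ ![n, 2*m, n+m] ![m, 2*m+2*n]
      fun q hq => by simpa [Fin.sum_univ_three, add_assoc] using div_add_div_add_div_le hq m n
end
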